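/- Define c(α) = e^{−α²/2}·( I₀(α²/2) + I₁(α²/2) ) for α > 0, where I_ν is the modified Bessel function of the first kind. Then c(α) = (2/(α√π)) · ∫₀¹ erf(α√(1−s²)) ds. -/

import Mathlib

open Real MeasureTheory intervalIntegral

/-- The error function `erf x = (2/√π) ∫₀ˣ e^{-t²} dt`. -/
noncomputable def erf (x : ℝ) : ℝ := 2 / Real.sqrt π * ∫ t in (0 : ℝ)..x, Real.exp (-t ^ 2)

/-- The modified Bessel function of the first kind of integer order `n`,
via the integral representation `Iₙ(x) = (1/π) ∫₀^π e^{x cos θ} cos(nθ) dθ`. -/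
noncomputable def besselI (n : ℕ) (x : ℝ) : ℝ :=
  (1 / π) * ∫ θ in (0 : ℝ)..π, Real.exp (x * Real.cos θ) * Real.cos (n * θ)

/-!
Both sides equal `(4/π) ∫₀^{π/2} e^{-α² sin² φ} cos² φ dφ`. For the Bessel side, the half-angle
formulas turn `e^{-x} e^{x cos θ} (1 + cos θ)` into `2 e^{-2x sin²(θ/2)} cos²(θ/2)`. For the `erf`
side, the substitution `s = cos φ` gives `∫₀^{π/2} erf(α sin φ) sin φ dφ`, and one integration by
parts against `sin φ = (-cos φ)'` leaves `(2α/√π) ∫₀^{π/2} e^{-α² sin² φ} cos² φ dφ`.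
-/

theorem hasDerivAt_erf (x : ℝ) : HasDerivAt erf (2 / √π * exp (-x ^ 2)) x := by
  have hcont : Continuous fun t : ℝ => exp (-t ^ 2) := by fun_prop
  exact (integral_hasDerivAt_right (hcont.intervalIntegrable 0 x)
    (hcont.stronglyMeasurableAtFilter volume _) hcont.continuousAt).const_mul _

@[fun_prop]
theorem continuous_erf : Continuous erf :=
  continuous_iff_continuousAt.2 fun x => (hasDerivAt_erf x).continuousAt

@[simp]
theorem erf_zero : erf 0 = 0 := by simp [erf]

theorem exp_neg_mul_exp_mul_cos_mul_one_add_cos (x θ : ℝ) :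
    exp (-x) * (exp (x * cos θ) * (1 + cos θ)) =
      2 * (exp (-(2 * x * sin (θ / 2) ^ 2)) * cos (θ / 2) ^ 2) := by
  have hcos : cos θ = 2 * cos (θ / 2) ^ 2 - 1 := by
    rw [← cos_two_mul]; ring_nf
  rw [← mul_assoc, ← exp_add, sin_sq, hcos]
  ring_nf

theorem exp_neg_mul_besselI_zero_add_besselI_one (x : ℝ) :
    exp (-x) * (besselI 0 x + besselI 1 x) =
      4 / π * ∫ φ in (0 : ℝ)..π / 2, exp (-(2 * x * sin φ ^ 2)) * cos φ ^ 2 := by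
  have hint : ∀ n : ℕ, IntervalIntegrable (fun θ => exp (x * cos θ) * cos (n * θ)) volume 0 π :=
    fun n => (by fun_prop : Continuous _).intervalIntegrable 0 π
  have hsum : besselI 0 x + besselI 1 x =
      1 / π * ∫ θ in (0 : ℝ)..π, exp (x * cos θ) * (1 + cos θ) := by
    rw [besselI, besselI, ← mul_add, ← integral_add (hint 0) (hint 1)]
    simp only [Nat.cast_zero, Nat.cast_one, zero_mul, one_mul, cos_zero, mul_add, mul_one]
  have hhalf := intervalIntegral.integral_comp_div
    (fun φ => exp (-(2 * x * sin φ ^ 2)) * cos φ ^ 2) (a := 0) (b := π) two_ne_zero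
  simp only [zero_div, smul_eq_mul] at hhalf
  rw [hsum, mul_left_comm, ← intervalIntegral.integral_const_mul]
  simp only [exp_neg_mul_exp_mul_cos_mul_one_add_cos, intervalIntegral.integral_const_mul, hhalf]
  ring

theorem integral_comp_sqrt_one_sub_sq {f : ℝ → ℝ} (hf : Continuous f) :
    ∫ s in (0 : ℝ)..1, f √(1 - s ^ 2) = ∫ φ in (0 : ℝ)..π / 2, f (sin φ) * sin φ := by
  have hsub := integral_deriv_smul_comp (a := π / 2) (b := 0) (f' := fun φ => -sin φ)
    (g := fun s => f √(1 - s ^ 2)) (fun φ _ => hasDerivAt_cos φ) (by fun_prop) (by fun_prop)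
  simp only [cos_pi_div_two, cos_zero, Function.comp_def, smul_eq_mul] at hsub
  rw [← hsub, integral_symm, ← intervalIntegral.integral_neg]
  refine integral_congr fun φ hφ => ?_
  rw [Set.uIcc_of_le (by positivity)] at hφ
  have hsin : 0 ≤ sin φ := sin_nonneg_of_nonneg_of_le_pi hφ.1 (by linarith [hφ.2, pi_pos])
  simp only [← sin_sq, sqrt_sq hsin]
  ring

theorem integral_erf_mul_sin_mul_sin (α : ℝ) :
    ∫ φ in (0 : ℝ)..π / 2, erf (α * sin φ) * sin φ =
      2 * α / √π * ∫ φ in (0 : ℝ)..π / 2, exp (-(α ^ 2 * sin φ ^ 2)) * cos φ ^ 2 := by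
  have hu : ∀ φ ∈ Set.uIcc 0 (π / 2), HasDerivAt (fun φ => erf (α * sin φ))
      (2 / √π * exp (-(α * sin φ) ^ 2) * (α * cos φ)) φ :=
    fun φ _ => (hasDerivAt_erf _).comp φ ((hasDerivAt_sin φ).const_mul α)
  have hv : ∀ φ ∈ Set.uIcc 0 (π / 2), HasDerivAt (fun φ => -cos φ) (sin φ) φ :=
    fun φ _ => by simpa only [neg_neg] using (hasDerivAt_cos φ).fun_neg
  rw [integral_mul_deriv_eq_deriv_mul hu hv ((by fun_prop : Continuous _).intervalIntegrable _ _)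
    (continuous_sin.intervalIntegrable _ _)]
  simp only [cos_pi_div_two, sin_zero, mul_zero, neg_zero, erf_zero, zero_mul, sub_zero, zero_sub,
    ← intervalIntegral.integral_const_mul, ← intervalIntegral.integral_neg]
  refine integral_congr fun φ _ => ?_
  rw [mul_pow]
  ring

theorem c_alpha_integral_rep (α : ℝ) (hα : 0 < α) :
    Real.exp (-α ^ 2 / 2) * (besselI 0 (α ^ 2 / 2) + besselI 1 (α ^ 2 / 2)) =
      2 / (α * Real.sqrt π) * ∫ s in (0 : ℝ)..1, erf (α * Real.sqrt (1 - s ^ 2)) := by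
  rw [neg_div, exp_neg_mul_besselI_zero_add_besselI_one,
    integral_comp_sqrt_one_sub_sq (f := fun t => erf (α * t)) (by fun_prop),
    integral_erf_mul_sin_mul_sin, ← mul_assoc, show 2 * (α ^ 2 / 2) = α ^ 2 by ring]
  congr 1
  field_simp
  rw [sq_sqrt pi_pos.le]
  ring
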